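/- Let (u_j^n)_{j∈ℤ, n≥0} be generated by the nonlocal scheme u_j^{n+1} = u_j^n − Δt Σ_{k=1}^{r∨1} W_k (g(u_j^n, u_{j+k}^n) − g(u_{j−k}^n, u_j^n)) from bounded initial data (u_j^0) of finite total variation, with B₁ = inf_j u_j^0, B₂ = sup_j u_j^0. Assume g is monotone (nondecreasing in its first argument, nonincreasing in its second), continuously differentiable on [B₁,B₂]², and the CFL condition (Δt/Δx)(sup_{[B₁,B₂]²}|∂₁g| + sup_{[B₁,B₂]²}|∂₂g|) ≤ 1 holds. Then the scheme is total variation diminishing: Σ_{j∈ℤ} |u_j^n − u_{j−1}^n| ≤ Σ_{j∈ℤ} |u_j^0 − u_{j−1}^0| for every n ≥ 0. -/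

import Mathlib

open MeasureTheory Real Set Filter Topology

noncomputable section

/-- The nonlocal entropy flux `q(a,b;c) = g(a ⊔ c, b ⊔ c) - g(a ⊓ c, b ⊓ c)`. -/
def entFlux (g : ℝ → ℝ → ℝ) (a b c : ℝ) : ℝ :=
  g (max a c) (max b c) - g (min a c) (min b c)

/-- An admissible nonlocal interaction kernel with horizon `δ`. -/
structure AdmissibleKernel (δ : ℝ) (ω : ℝ → ℝ) : Prop where
  nonneg : ∀ h, 0 ≤ ω h
  integrable : Integrable ω
  supp : ∀ h, h ∉ Set.Icc 0 δ → ω h = 0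
  normalized : (∫ h in (0:ℝ)..δ, ω h) = 1

/-- `r = ⌊δ / Δx⌋`. -/
def gridR (δ Δx : ℝ) : ℕ := ⌊δ / Δx⌋₊

/-- `r ∨ 1 = max r 1`. -/
def gridR1 (δ Δx : ℝ) : ℕ := max (gridR δ Δx) 1

/-- The quadrature weights `W_k`. -/
def qWeight (ω : ℝ → ℝ) (δ Δx : ℝ) (k : ℕ) : ℝ :=
  (1 / ((k : ℝ) * Δx)) * (∫ h in (((k : ℝ) - 1) * Δx)..((k : ℝ) * Δx), ω h)
    + (if k = gridR δ Δx then 1 else 0) / ((gridR1 δ Δx : ℝ) * Δx)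
        * (∫ h in ((gridR δ Δx : ℝ) * Δx)..δ, ω h)

/-- One step of the nonlocal scheme `H`. -/
def schemeStep (g : ℝ → ℝ → ℝ) (Δt : ℝ) (W : ℕ → ℝ) (R : ℕ) (v : ℤ → ℝ) (j : ℤ) : ℝ :=
  v j - Δt * ∑ k ∈ Finset.Icc 1 R,
    W k * (g (v j) (v (j + (k : ℤ))) - g (v (j - (k : ℤ))) (v j))

/-- Iterates of the nonlocal scheme. -/
def schemeSol (g : ℝ → ℝ → ℝ) (Δt : ℝ) (W : ℕ → ℝ) (R : ℕ) (v0 : ℤ → ℝ) : ℕ → ℤ → ℝ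
  | 0 => v0
  | n + 1 => schemeStep g Δt W R (schemeSol g Δt W R v0 n)

/-- Cell averages of the initial data. -/
def cellAvg (u₀ : ℝ → ℝ) (Δx : ℝ) (j : ℤ) : ℝ :=
  (1 / Δx) * ∫ x in (((j : ℝ) - 1/2) * Δx)..(((j : ℝ) + 1/2) * Δx), u₀ x

/-- The numerical solution of the nonlocal scheme with initial data `u₀`. -/
def numSol (g : ℝ → ℝ → ℝ) (ω : ℝ → ℝ) (δ Δx Δt : ℝ) (u₀ : ℝ → ℝ) : ℕ → ℤ → ℝ :=
  schemeSol g Δt (qWeight ω δ Δx) (gridR1 δ Δx) (cellAvg u₀ Δx)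

/-- Piecewise constant interpolant of a grid function. -/
def pcInterp (Δx Δt : ℝ) (v : ℕ → ℤ → ℝ) (x t : ℝ) : ℝ :=
  v ⌊t / Δt⌋₊ ⌊x / Δx + 1/2⌋

/-- The piecewise-constant numerical solution `u^{Δ,δ}`. -/
def numInterp (g : ℝ → ℝ → ℝ) (ω : ℝ → ℝ) (δ Δx Δt : ℝ) (u₀ : ℝ → ℝ) (x t : ℝ) : ℝ :=
  pcInterp Δx Δt (numSol g ω δ Δx Δt u₀) x t

/-- `h^Δ(h) = kΔx` for `h ∈ [(k-1)Δx, kΔx)`. -/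
def hDelta (Δx h : ℝ) : ℝ := ((⌊h / Δx⌋ : ℝ) + 1) * Δx

/-- Interpolant of the test function: affine in `x` on each grid cell, piecewise
constant in `t`. -/
def phiDelta (φ : ℝ → ℝ → ℝ) (Δx Δt : ℝ) (x t : ℝ) : ℝ :=
  φ (((⌊x / Δx + 1/2⌋ : ℝ) - 1/2) * Δx) ((⌊t / Δt⌋₊ : ℝ) * Δt)
    + ((x - ((⌊x / Δx + 1/2⌋ : ℝ) - 1/2) * Δx) / Δx)
      * (φ (((⌊x / Δx + 1/2⌋ : ℝ) + 1/2) * Δx) ((⌊t / Δt⌋₊ : ℝ) * Δt)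
          - φ (((⌊x / Δx + 1/2⌋ : ℝ) - 1/2) * Δx) ((⌊t / Δt⌋₊ : ℝ) * Δt))

/-- The `2r`-point numerical flux `𝕘`. -/
def bigFlux (g : ℝ → ℝ → ℝ) (W : ℕ → ℝ) (Δx : ℝ) (R : ℕ) (v : ℤ → ℝ) (j : ℤ) : ℝ :=
  ∑ k ∈ Finset.Icc 1 R, ∑ l ∈ Finset.Icc 1 k,
    g (v (j - (l : ℤ))) (v (j - (l : ℤ) + (k : ℤ))) * W k * Δx

/-- Supremum of `|∂₁ g|` over `[B₁,B₂] × [B₁,B₂]`. -/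
def supAbsDeriv1 (g : ℝ → ℝ → ℝ) (B₁ B₂ : ℝ) : ℝ :=
  sSup ((fun p : ℝ × ℝ => |derivWithin (fun a => g a p.2) (Set.Icc B₁ B₂) p.1|) ''
    (Set.Icc B₁ B₂ ×ˢ Set.Icc B₁ B₂))

/-- Supremum of `|∂₂ g|` over `[B₁,B₂] × [B₁,B₂]`. -/
def supAbsDeriv2 (g : ℝ → ℝ → ℝ) (B₁ B₂ : ℝ) : ℝ :=
  sSup ((fun p : ℝ × ℝ => |derivWithin (fun b => g p.1 b) (Set.Icc B₁ B₂) p.2|) ''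
    (Set.Icc B₁ B₂ ×ˢ Set.Icc B₁ B₂))

/-- Entropy solution of the nonlocal conservation law on `ℝ × [0,T]`. -/
structure IsEntropySolNonlocal (T δ : ℝ) (ω : ℝ → ℝ) (g : ℝ → ℝ → ℝ)
    (u₀ : ℝ → ℝ) (u : ℝ → ℝ → ℝ) : Prop where
  bounded : ∃ M, ∀ x t, |u x t| ≤ M
  integrable : ∀ t ∈ Set.Icc (0:ℝ) T, Integrable (fun x => u x t)
  contL1 : ∀ t₀ ∈ Set.Icc (0:ℝ) T,
    Tendsto (fun t => ∫ x : ℝ, |u x t - u x t₀|) (nhdsWithin t₀ (Set.Icc 0 T)) (nhds 0)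
  init : ∀ x, u x 0 = u₀ x
  entropy : ∀ φ : ℝ → ℝ → ℝ, ContDiff ℝ 1 (fun p : ℝ × ℝ => φ p.1 p.2) →
    HasCompactSupport (fun p : ℝ × ℝ => φ p.1 p.2) → (∀ x t, 0 ≤ φ x t) → ∀ c : ℝ,
    0 ≤ (∫ t in (0:ℝ)..T, ∫ x : ℝ, |u x t - c| * deriv (fun s => φ x s) t)
      + ∫ t in (0:ℝ)..T, ∫ x : ℝ, ∫ h in (0:ℝ)..δ,
          ((φ (x + h) t - φ x t) / h) * entFlux g (u x t) (u (x + h) t) c * ω h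

/-- Kruzhkov entropy solution of the local conservation law `u_t + f(u)_x = 0`. -/
structure IsEntropySolLocal (T : ℝ) (f : ℝ → ℝ) (u₀ : ℝ → ℝ) (u : ℝ → ℝ → ℝ) : Prop where
  bounded : ∃ M, ∀ x t, |u x t| ≤ M
  integrable : ∀ t ∈ Set.Icc (0:ℝ) T, Integrable (fun x => u x t)
  contL1 : ∀ t₀ ∈ Set.Icc (0:ℝ) T,
    Tendsto (fun t => ∫ x : ℝ, |u x t - u x t₀|) (nhdsWithin t₀ (Set.Icc 0 T)) (nhds 0)
  init : ∀ x, u x 0 = u₀ x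
  entropy : ∀ φ : ℝ → ℝ → ℝ, ContDiff ℝ 1 (fun p : ℝ × ℝ => φ p.1 p.2) →
    HasCompactSupport (fun p : ℝ × ℝ => φ p.1 p.2) → (∀ x t, 0 ≤ φ x t) → ∀ c : ℝ,
    0 ≤ ∫ t in (0:ℝ)..T, ∫ x : ℝ,
        (|u x t - c| * deriv (fun s => φ x s) t
          + Real.sign (u x t - c) * (f (u x t) - f c) * deriv (fun y => φ y t) x)

/-!
For grid functions `u, v` with values in `[B₁, B₂]`, one step `H` of the scheme satisfies
`H u j - H v j = ∑ᵢ Aᵢ j * (u - v) (j + oᵢ)` over the stencil of offsets `0, ±1, …, ±R`, with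
coefficients built from difference quotients of `g`. Monotonicity of `g` makes the off-centre
coefficients nonnegative; the Lipschitz bounds from the `C¹` hypothesis, `∑ₖ W_k ≤ 1 / Δx` and the
CFL condition make the central one nonnegative; conservation makes every column sum to `1`. So `H`
is monotone, hence preserves `[B₁, B₂]`, and is an `ℓ¹` contraction. As `H` commutes with
translations, the total variation of `u n` is the `ℓ¹` distance from `u n` to its translate by one
cell, so it does not increase.
-/

theorem hasDerivWithinAt_slice_fst {G : ℝ × ℝ → ℝ} {s t : Set ℝ} {a b : ℝ}
    (hG : DifferentiableWithinAt ℝ G (s ×ˢ t) (a, b)) (hb : b ∈ t) :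
    HasDerivWithinAt (fun x => G (x, b)) (fderivWithin ℝ G (s ×ˢ t) (a, b) (1, 0)) s a :=
  hG.hasFDerivWithinAt.comp_hasDerivWithinAt a
    ((hasDerivWithinAt_id a s).prodMk (hasDerivWithinAt_const a s b))
    fun _ hx => Set.mk_mem_prod hx hb

theorem supAbsDeriv1_nonneg (g : ℝ → ℝ → ℝ) (B₁ B₂ : ℝ) : 0 ≤ supAbsDeriv1 g B₁ B₂ :=
  Real.sSup_nonneg <| by rintro _ ⟨p, -, rfl⟩; exact abs_nonneg _

theorem abs_derivWithin_le_supAbsDeriv1 {g : ℝ → ℝ → ℝ} {B₁ B₂ a b : ℝ} (hlt : B₁ < B₂)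
    (hg : ContDiffOn ℝ 1 (fun p : ℝ × ℝ => g p.1 p.2) (Icc B₁ B₂ ×ˢ Icc B₁ B₂))
    (ha : a ∈ Icc B₁ B₂) (hb : b ∈ Icc B₁ B₂) :
    |derivWithin (fun x => g x b) (Icc B₁ B₂) a| ≤ supAbsDeriv1 g B₁ B₂ := by
  have hI : UniqueDiffOn ℝ (Icc B₁ B₂) := uniqueDiffOn_Icc hlt
  obtain ⟨M, hM⟩ := (isCompact_Icc.prod isCompact_Icc).exists_bound_of_continuousOn
    (hg.continuousOn_fderivWithin (hI.prod hI) le_rfl)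
  have hderiv : ∀ p ∈ Icc B₁ B₂ ×ˢ Icc B₁ B₂,
      |derivWithin (fun x => g x p.2) (Icc B₁ B₂) p.1|
        ≤ ‖fderivWithin ℝ (fun p : ℝ × ℝ => g p.1 p.2) (Icc B₁ B₂ ×ˢ Icc B₁ B₂) p‖ := by
    rintro ⟨x, y⟩ ⟨hx, hy⟩
    rw [(hasDerivWithinAt_slice_fst ((hg.differentiableOn one_ne_zero) _ ⟨hx, hy⟩) hy).derivWithin
      (hI x hx)]
    simpa using (fderivWithin ℝ (fun p : ℝ × ℝ => g p.1 p.2) _ (x, y)).le_opNorm (1, 0)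
  refine le_csSup ⟨M, ?_⟩ ⟨(a, b), ⟨ha, hb⟩, rfl⟩
  rintro _ ⟨p, hp, rfl⟩
  exact (hderiv p hp).trans (hM p hp)

theorem abs_sub_le_supAbsDeriv1_mul {g : ℝ → ℝ → ℝ} {B₁ B₂ x x' y : ℝ}
    (hg : ContDiffOn ℝ 1 (fun p : ℝ × ℝ => g p.1 p.2) (Icc B₁ B₂ ×ˢ Icc B₁ B₂))
    (hx : x ∈ Icc B₁ B₂) (hx' : x' ∈ Icc B₁ B₂) (hy : y ∈ Icc B₁ B₂) :
    |g x y - g x' y| ≤ supAbsDeriv1 g B₁ B₂ * |x - x'| := by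
  rcases lt_or_ge B₁ B₂ with hlt | hge
  · have hdiff : DifferentiableOn ℝ (fun x => g x y) (Icc B₁ B₂) := fun a ha =>
      (hasDerivWithinAt_slice_fst ((hg.differentiableOn one_ne_zero) _ ⟨ha, hy⟩) hy)
        |>.differentiableWithinAt
    simpa using (convex_Icc B₁ B₂).norm_image_sub_le_of_norm_derivWithin_le hdiff
      (fun a ha => abs_derivWithin_le_supAbsDeriv1 hlt hg ha hy) hx' hx
  · obtain rfl : x = x' := by linarith [hx.1, hx.2, hx'.1, hx'.2]
    simp

theorem supAbsDeriv2_eq_supAbsDeriv1_swap (g : ℝ → ℝ → ℝ) (B₁ B₂ : ℝ) :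
    supAbsDeriv2 g B₁ B₂ = supAbsDeriv1 (Function.swap g) B₁ B₂ := by
  rw [supAbsDeriv2, supAbsDeriv1]
  conv_rhs => rw [← Set.image_swap_prod, Set.image_image]
  rfl

theorem abs_sub_le_supAbsDeriv2_mul {g : ℝ → ℝ → ℝ} {B₁ B₂ x y y' : ℝ}
    (hg : ContDiffOn ℝ 1 (fun p : ℝ × ℝ => g p.1 p.2) (Icc B₁ B₂ ×ˢ Icc B₁ B₂))
    (hx : x ∈ Icc B₁ B₂) (hy : y ∈ Icc B₁ B₂) (hy' : y' ∈ Icc B₁ B₂) :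
    |g x y - g x y'| ≤ supAbsDeriv2 g B₁ B₂ * |y - y'| := by
  rw [supAbsDeriv2_eq_supAbsDeriv1_swap]
  exact abs_sub_le_supAbsDeriv1_mul (g := Function.swap g)
    (hg.comp (contDiff_snd.prodMk contDiff_fst).contDiffOn fun _ hp => ⟨hp.2, hp.1⟩) hy hy' hx

theorem abs_slope_le {f : ℝ → ℝ} {L a b : ℝ} (hL : 0 ≤ L)
    (h : |f b - f a| ≤ L * |b - a|) : |slope f a b| ≤ L := by
  rcases eq_or_ne a b with rfl | hab
  · simpa using hL
  · rw [slope_def_field, abs_div]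
    exact div_le_of_le_mul₀ (abs_nonneg _) hL h

theorem summable_and_tsum_abs_le_of_colSum_eq_one {ι : Type*} {F : Finset ι} {o : ι → ℤ}
    {A : ι → ℤ → ℝ} {e H : ℤ → ℝ} (hA : ∀ i ∈ F, ∀ j, 0 ≤ A i j)
    (hcol : ∀ j, ∑ i ∈ F, A i (j - o i) = 1)
    (hH : ∀ j, H j = ∑ i ∈ F, A i j * e (j + o i)) (he : Summable fun j => |e j|) :
    Summable (fun j => |H j|) ∧ ∑' j, |H j| ≤ ∑' j, |e j| := by
  have hA1 : ∀ i ∈ F, ∀ j, A i j ≤ 1 := fun i hi j => by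
    simpa [hcol] using Finset.single_le_sum (f := fun i' => A i' (j + o i - o i'))
      (fun i' hi' => hA i' hi' _) hi
  have hterm : ∀ i ∈ F, Summable fun j => A i (j - o i) * |e j| := fun i hi =>
    he.of_nonneg_of_le (fun j => mul_nonneg (hA i hi _) (abs_nonneg _))
      fun j => mul_le_of_le_one_left (abs_nonneg _) (hA1 i hi _)
  have hshift : ∀ i, (fun j => A i j * |e (j + o i)|)
      = (fun j => A i (j - o i) * |e j|) ∘ Equiv.addRight (o i) := fun i => by
    ext j; simp
  have hterm' : ∀ i ∈ F, Summable fun j => A i j * |e (j + o i)| := fun i hi =>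
    hshift i ▸ (Equiv.addRight (o i)).summable_iff.mpr (hterm i hi)
  have hbound : ∀ j, |H j| ≤ ∑ i ∈ F, A i j * |e (j + o i)| := fun j => by
    rw [hH]
    refine (Finset.abs_sum_le_sum_abs _ _).trans_eq (Finset.sum_congr rfl fun i hi => ?_)
    rw [abs_mul, abs_of_nonneg (hA i hi j)]
  have hM : Summable fun j => ∑ i ∈ F, A i j * |e (j + o i)| := summable_sum hterm'
  have hHs : Summable fun j => |H j| := hM.of_nonneg_of_le (fun _ => abs_nonneg _) hbound
  refine ⟨hHs, ?_⟩
  calc ∑' j, |H j| ≤ ∑' j, ∑ i ∈ F, A i j * |e (j + o i)| := hHs.tsum_le_tsum hbound hM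
    _ = ∑ i ∈ F, ∑' j, A i (j - o i) * |e j| := by
      rw [Summable.tsum_finsetSum hterm']
      refine Finset.sum_congr rfl fun i _ => ?_
      rw [hshift]
      exact (Equiv.addRight (o i)).tsum_eq (fun j => A i (j - o i) * |e j|)
    _ = ∑' j, |e j| := by
      rw [← Summable.tsum_finsetSum hterm]
      simp [← Finset.sum_mul, hcol]

/-- `none` is the centre `j` of the stencil, `some (inl k)` is `j + k` and `some (inr k)` is
`j - k`. -/
def stencil (R : ℕ) : Finset (Option (ℕ ⊕ ℕ)) :=
  ((Finset.Icc 1 R).disjSum (Finset.Icc 1 R)).insertNone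

def stencilOffset : Option (ℕ ⊕ ℕ) → ℤ
  | none => 0
  | some (.inl k) => k
  | some (.inr k) => -k

def slopeFst (g : ℝ → ℝ → ℝ) (u v : ℤ → ℝ) (j : ℤ) (k : ℕ) : ℝ :=
  slope (fun a => g a (u (j + k))) (v j) (u j)

def slopeSnd (g : ℝ → ℝ → ℝ) (u v : ℤ → ℝ) (j : ℤ) (k : ℕ) : ℝ :=
  slope (g (v j)) (v (j + k)) (u (j + k))

def stencilCoeff (g : ℝ → ℝ → ℝ) (Δt : ℝ) (W : ℕ → ℝ) (R : ℕ) (u v : ℤ → ℝ) :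
    Option (ℕ ⊕ ℕ) → ℤ → ℝ
  | none, j =>
    1 - Δt * ∑ k ∈ Finset.Icc 1 R, W k * (slopeFst g u v j k - slopeSnd g u v (j - k) k)
  | some (.inl k), j => -(Δt * W k * slopeSnd g u v j k)
  | some (.inr k), j => Δt * W k * slopeFst g u v (j - k) k

theorem flux_sub_flux (g : ℝ → ℝ → ℝ) (u v : ℤ → ℝ) (j : ℤ) (k : ℕ) :
    g (u j) (u (j + k)) - g (v j) (v (j + k))
      = slopeFst g u v j k * (u j - v j) + slopeSnd g u v j k * (u (j + k) - v (j + k)) := by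
  simp only [slopeFst, slopeSnd, mul_comm (slope _ _ _), ← smul_eq_mul, sub_smul_slope,
    vsub_eq_sub]
  ring

section Stencil

variable {g : ℝ → ℝ → ℝ} {Δt : ℝ} {W : ℕ → ℝ} {R : ℕ} {u v : ℤ → ℝ}

theorem schemeStep_sub_schemeStep (j : ℤ) :
    schemeStep g Δt W R u j - schemeStep g Δt W R v j
      = ∑ i ∈ stencil R, stencilCoeff g Δt W R u v i j
          * (u (j + stencilOffset i) - v (j + stencilOffset i)) := by
  have hk : ∀ k : ℕ, Δt * (W k * (g (u j) (u (j + k)) - g (u (j - k)) (u j))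
      - W k * (g (v j) (v (j + k)) - g (v (j - k)) (v j)))
      = Δt * (W k * (slopeFst g u v j k - slopeSnd g u v (j - k) k)) * (u j - v j)
        - (-(Δt * W k * slopeSnd g u v j k) * (u (j + k) - v (j + k))
          + Δt * W k * slopeFst g u v (j - k) k * (u (j - k) - v (j - k))) := fun k => by
    have hback := flux_sub_flux g u v (j - k) k
    rw [sub_add_cancel] at hback
    linear_combination Δt * W k * (flux_sub_flux g u v j k - hback)
  simp only [schemeStep, stencil, Finset.sum_insertNone, Finset.sum_disjSum, stencilCoeff,
    stencilOffset, add_zero, ← sub_eq_add_neg]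
  rw [sub_sub_sub_comm, ← mul_sub, ← Finset.sum_sub_distrib, Finset.mul_sum, Finset.mul_sum,
    Finset.sum_congr rfl fun k _ => hk k, Finset.sum_sub_distrib, ← Finset.sum_mul,
    Finset.sum_add_distrib]
  ring

theorem sum_stencilCoeff_eq_one (j : ℤ) :
    ∑ i ∈ stencil R, stencilCoeff g Δt W R u v i (j - stencilOffset i) = 1 := by
  simp only [stencil, Finset.sum_insertNone, Finset.sum_disjSum, stencilCoeff,
    stencilOffset, sub_zero, sub_neg_eq_add, add_sub_cancel_right]
  rw [← Finset.sum_add_distrib, Finset.mul_sum, sub_add, sub_eq_self, sub_eq_zero]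
  exact Finset.sum_congr rfl fun k _ => by ring

theorem stencilCoeff_nonneg {L₁ L₂ : ℝ} (hΔt : 0 ≤ Δt) (hW : ∀ k ∈ Finset.Icc 1 R, 0 ≤ W k)
    (hP : ∀ j k, slopeFst g u v j k ∈ Icc 0 L₁) (hQ : ∀ j k, slopeSnd g u v j k ∈ Icc (-L₂) 0)
    (hCFL : Δt * (∑ k ∈ Finset.Icc 1 R, W k) * (L₁ + L₂) ≤ 1) :
    ∀ i ∈ stencil R, ∀ j, 0 ≤ stencilCoeff g Δt W R u v i j := by
  rintro (_ | k | k) hi j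
  · have hsum : ∑ k ∈ Finset.Icc 1 R, W k * (slopeFst g u v j k - slopeSnd g u v (j - k) k)
        ≤ (∑ k ∈ Finset.Icc 1 R, W k) * (L₁ + L₂) := by
      rw [Finset.sum_mul]
      refine Finset.sum_le_sum fun k hk => mul_le_mul_of_nonneg_left ?_ (hW k hk)
      linarith [(hP j k).2, (hQ (j - k) k).1]
    simp only [stencilCoeff]
    nlinarith
  · rw [stencil, Finset.some_mem_insertNone, Finset.inl_mem_disjSum] at hi
    simp only [stencilCoeff]
    nlinarith [mul_nonneg hΔt (hW k hi), (hQ j k).2]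
  · rw [stencil, Finset.some_mem_insertNone, Finset.inr_mem_disjSum] at hi
    exact mul_nonneg (mul_nonneg hΔt (hW k hi)) (hP _ k).1

theorem schemeStep_le_schemeStep (hA : ∀ i ∈ stencil R, ∀ j, 0 ≤ stencilCoeff g Δt W R u v i j)
    (huv : u ≤ v) (j : ℤ) : schemeStep g Δt W R u j ≤ schemeStep g Δt W R v j := by
  rw [← sub_nonpos, schemeStep_sub_schemeStep]
  exact Finset.sum_nonpos fun i hi =>
    mul_nonpos_of_nonneg_of_nonpos (hA i hi j) (sub_nonpos.mpr (huv _))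

theorem schemeStep_l1_contraction
    (hA : ∀ i ∈ stencil R, ∀ j, 0 ≤ stencilCoeff g Δt W R u v i j)
    (huv : Summable fun j => |u j - v j|) :
    Summable (fun j => |schemeStep g Δt W R u j - schemeStep g Δt W R v j|) ∧
      ∑' j, |schemeStep g Δt W R u j - schemeStep g Δt W R v j| ≤ ∑' j, |u j - v j| :=
  summable_and_tsum_abs_le_of_colSum_eq_one hA sum_stencilCoeff_eq_one
    schemeStep_sub_schemeStep huv

theorem schemeStep_const (c : ℝ) (j : ℤ) : schemeStep g Δt W R (fun _ => c) j = c := by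
  simp [schemeStep]

theorem schemeStep_mem_Icc {a b : ℝ}
    (hA : ∀ u v : ℤ → ℝ, (∀ j, u j ∈ Icc a b) → (∀ j, v j ∈ Icc a b) →
      ∀ i ∈ stencil R, ∀ j, 0 ≤ stencilCoeff g Δt W R u v i j)
    (hv : ∀ j, v j ∈ Icc a b) (j : ℤ) : schemeStep g Δt W R v j ∈ Icc a b := by
  have hab : a ≤ b := (hv 0).1.trans (hv 0).2
  constructor
  · simpa [schemeStep_const] using
      schemeStep_le_schemeStep (hA _ v (fun _ => ⟨le_rfl, hab⟩) hv) (fun i => (hv i).1) j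
  · simpa [schemeStep_const] using
      schemeStep_le_schemeStep (hA v _ hv fun _ => ⟨hab, le_rfl⟩) (fun i => (hv i).2) j

theorem schemeStep_shift (w : ℤ → ℝ) (m j : ℤ) :
    schemeStep g Δt W R (fun i => w (i - m)) j = schemeStep g Δt W R w (j - m) := by
  simp only [schemeStep, sub_right_comm _ m, sub_add_eq_add_sub]

end Stencil

theorem sum_Icc_integral_cells {f : ℝ → ℝ} (hf : Integrable f) (Δx : ℝ) (n : ℕ) :
    ∑ k ∈ Finset.Icc 1 n, ∫ h in ((k : ℝ) - 1) * Δx..(k : ℝ) * Δx, f h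
      = ∫ h in (0 : ℝ)..n * Δx, f h := by
  induction n with
  | zero => simp
  | succ n ih =>
    rw [Finset.sum_Icc_succ_top (by omega), ih, Nat.cast_succ, add_sub_cancel_right,
      intervalIntegral.integral_add_adjacent_intervals hf.intervalIntegrable hf.intervalIntegrable]

theorem gridR_mul_le {δ Δx : ℝ} (hΔx : 0 < Δx) (hr : gridR δ Δx ≠ 0) :
    (gridR δ Δx : ℝ) * Δx ≤ δ :=
  (le_div_iff₀ hΔx).mp ((Nat.le_floor_iff' hr).mp le_rfl)

theorem qWeight_nonneg {δ Δx : ℝ} {ω : ℝ → ℝ} {k : ℕ} (hΔx : 0 < Δx)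
    (hω : AdmissibleKernel δ ω) (hk : 1 ≤ k) : 0 ≤ qWeight ω δ Δx k := by
  have hcell : 0 ≤ ∫ h in ((k : ℝ) - 1) * Δx..(k : ℝ) * Δx, ω h :=
    intervalIntegral.integral_nonneg (by nlinarith) fun h _ => hω.nonneg h
  rw [qWeight]
  split_ifs with hkr
  · have hrest : 0 ≤ ∫ h in (gridR δ Δx : ℝ) * Δx..δ, ω h :=
      intervalIntegral.integral_nonneg (gridR_mul_le hΔx (by omega)) fun h _ => hω.nonneg h
    positivity
  · simpa using mul_nonneg (by positivity) hcell

theorem qWeight_le {δ Δx : ℝ} {ω : ℝ → ℝ} {k : ℕ} (hΔx : 0 < Δx)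
    (hω : AdmissibleKernel δ ω) (hk : 1 ≤ k) :
    qWeight ω δ Δx k ≤ ((∫ h in ((k : ℝ) - 1) * Δx..(k : ℝ) * Δx, ω h)
      + if k = gridR δ Δx then ∫ h in (gridR δ Δx : ℝ) * Δx..δ, ω h else 0) / Δx := by
  have hcell : 0 ≤ ∫ h in ((k : ℝ) - 1) * Δx..(k : ℝ) * Δx, ω h :=
    intervalIntegral.integral_nonneg (by nlinarith) fun h _ => hω.nonneg h
  have hinv : ∀ {m : ℕ}, 1 ≤ m → 1 / ((m : ℝ) * Δx) ≤ 1 / Δx := fun hm =>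
    one_div_le_one_div_of_le hΔx (le_mul_of_one_le_left hΔx.le (by exact_mod_cast hm))
  rw [qWeight]
  split_ifs with hkr
  · have hrest : 0 ≤ ∫ h in (gridR δ Δx : ℝ) * Δx..δ, ω h :=
      intervalIntegral.integral_nonneg (gridR_mul_le hΔx (by omega)) fun h _ => hω.nonneg h
    exact (add_le_add (mul_le_mul_of_nonneg_right (hinv hk) hcell)
      (mul_le_mul_of_nonneg_right (hinv (le_max_right _ _)) hrest)).trans_eq (by ring)
  · simpa [div_eq_inv_mul] using mul_le_mul_of_nonneg_right (hinv hk) hcell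

theorem sum_qWeight_le {δ Δx : ℝ} {ω : ℝ → ℝ} (hΔx : 0 < Δx) (hω : AdmissibleKernel δ ω) :
    ∑ k ∈ Finset.Icc 1 (gridR1 δ Δx), qWeight ω δ Δx k ≤ 1 / Δx := by
  have hI : ∀ a b, IntervalIntegrable ω volume a b := fun _ _ =>
    hω.integrable.intervalIntegrable
  refine (Finset.sum_le_sum fun k hk => qWeight_le hΔx hω (Finset.mem_Icc.mp hk).1).trans_eq ?_
  rw [← Finset.sum_div, Finset.sum_add_distrib, sum_Icc_integral_cells hω.integrable,
    Finset.sum_ite_eq']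
  congr 1
  rcases Nat.eq_zero_or_pos (gridR δ Δx) with hr | hr
  · have hδ : δ < Δx := (div_lt_one hΔx).mp (Nat.floor_eq_zero.mp hr)
    have htail : ∫ h in δ..Δx, ω h = 0 := by
      rw [intervalIntegral.integral_of_le hδ.le]
      exact setIntegral_eq_zero_of_forall_eq_zero fun h hh =>
        hω.supp h fun hh' => hh.1.not_ge hh'.2
    have hR : gridR1 δ Δx = 1 := by simp [gridR1, hr]
    rw [hR, hr, if_neg (by simp), add_zero, Nat.cast_one, one_mul,
      ← intervalIntegral.integral_add_adjacent_intervals (hI 0 δ) (hI δ Δx), hω.normalized,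
      htail, add_zero]
  · have hR : gridR1 δ Δx = gridR δ Δx := max_eq_left hr
    rw [hR, if_pos (Finset.mem_Icc.mpr ⟨hr, le_rfl⟩),
      intervalIntegral.integral_add_adjacent_intervals (hI _ _) (hI _ _), hω.normalized]

theorem stencilCoeff_qWeight_nonneg {δ Δx Δt B₁ B₂ : ℝ} {ω : ℝ → ℝ} {g : ℝ → ℝ → ℝ}
    (hΔx : 0 < Δx) (hΔt : 0 ≤ Δt) (hω : AdmissibleKernel δ ω)
    (hg1 : ∀ a a' b, a ∈ Icc B₁ B₂ → a' ∈ Icc B₁ B₂ → b ∈ Icc B₁ B₂ → a ≤ a' → g a b ≤ g a' b)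
    (hg2 : ∀ a b b', a ∈ Icc B₁ B₂ → b ∈ Icc B₁ B₂ → b' ∈ Icc B₁ B₂ → b ≤ b' → g a b' ≤ g a b)
    (hgC1 : ContDiffOn ℝ 1 (fun p : ℝ × ℝ => g p.1 p.2) (Icc B₁ B₂ ×ˢ Icc B₁ B₂))
    (hCFL : Δt / Δx * (supAbsDeriv1 g B₁ B₂ + supAbsDeriv2 g B₁ B₂) ≤ 1)
    {u v : ℤ → ℝ} (hu : ∀ j, u j ∈ Icc B₁ B₂) (hv : ∀ j, v j ∈ Icc B₁ B₂) :
    ∀ i ∈ stencil (gridR1 δ Δx), ∀ j,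
      0 ≤ stencilCoeff g Δt (qWeight ω δ Δx) (gridR1 δ Δx) u v i j := by
  have hL₁ := supAbsDeriv1_nonneg g B₁ B₂
  have hL₂ : 0 ≤ supAbsDeriv2 g B₁ B₂ := by
    rw [supAbsDeriv2_eq_supAbsDeriv1_swap]; exact supAbsDeriv1_nonneg _ B₁ B₂
  set L₁ := supAbsDeriv1 g B₁ B₂
  set L₂ := supAbsDeriv2 g B₁ B₂
  have hW : ∀ k ∈ Finset.Icc 1 (gridR1 δ Δx), 0 ≤ qWeight ω δ Δx k := fun k hk =>
    qWeight_nonneg hΔx hω (Finset.mem_Icc.mp hk).1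
  refine stencilCoeff_nonneg (L₁ := L₁) (L₂ := L₂) hΔt hW (fun j k => ⟨?_, ?_⟩)
    (fun j k => ⟨?_, ?_⟩) ?_
  · exact MonotoneOn.slope_nonneg (fun a ha a' ha' h => hg1 a a' _ ha ha' (hu _) h) (hv j) (hu j)
  · exact (le_abs_self _).trans
      (abs_slope_le hL₁ (abs_sub_le_supAbsDeriv1_mul hgC1 (hu j) (hv j) (hu _)))
  · exact neg_le_of_abs_le
      (abs_slope_le hL₂ (abs_sub_le_supAbsDeriv2_mul hgC1 (hv j) (hu _) (hv _)))
  · exact AntitoneOn.slope_nonpos (fun b hb b' hb' h => hg2 _ b b' (hv j) hb hb' h) (hv _) (hu _)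
  · calc Δt * (∑ k ∈ Finset.Icc 1 (gridR1 δ Δx), qWeight ω δ Δx k) * (L₁ + L₂)
        ≤ Δt * (1 / Δx) * (L₁ + L₂) := by gcongr; exact sum_qWeight_le hΔx hω
      _ = Δt / Δx * (L₁ + L₂) := by ring
      _ ≤ 1 := hCFL

theorem discrete_TVD_general
    (δ Δx Δt B₁ B₂ : ℝ) (hΔx : 0 < Δx) (hΔt : 0 < Δt)
    (ω : ℝ → ℝ) (hω : AdmissibleKernel δ ω)
    (g : ℝ → ℝ → ℝ)
    (u : ℕ → ℤ → ℝ)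
    (hrec : ∀ n, u (n + 1) = schemeStep g Δt (qWeight ω δ Δx) (gridR1 δ Δx) (u n))
    (hB₁ : IsGLB (Set.range (u 0)) B₁) (hB₂ : IsLUB (Set.range (u 0)) B₂)
    (hTV : Summable (fun j : ℤ => |u 0 j - u 0 (j - 1)|))
    (hg1 : ∀ a a' b, a ∈ Set.Icc B₁ B₂ → a' ∈ Set.Icc B₁ B₂ → b ∈ Set.Icc B₁ B₂ →
      a ≤ a' → g a b ≤ g a' b)
    (hg2 : ∀ a b b', a ∈ Set.Icc B₁ B₂ → b ∈ Set.Icc B₁ B₂ → b' ∈ Set.Icc B₁ B₂ →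
      b ≤ b' → g a b' ≤ g a b)
    (hgC1 : ContDiffOn ℝ 1 (fun p : ℝ × ℝ => g p.1 p.2) (Set.Icc B₁ B₂ ×ˢ Set.Icc B₁ B₂))
    (hCFL : Δt / Δx * (supAbsDeriv1 g B₁ B₂ + supAbsDeriv2 g B₁ B₂) ≤ 1)
    :
    ∀ n, Summable (fun j : ℤ => |u n j - u n (j - 1)|) ∧
      ∑' j : ℤ, |u n j - u n (j - 1)| ≤ ∑' j : ℤ, |u 0 j - u 0 (j - 1)| := by
  have hA (v w : ℤ → ℝ) :=
    stencilCoeff_qWeight_nonneg (u := v) (v := w) hΔx hΔt.le hω hg1 hg2 hgC1 hCFL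
  have hbound : ∀ n j, u n j ∈ Icc B₁ B₂ := by
    intro n
    induction n with
    | zero => exact fun j => ⟨hB₁.1 ⟨j, rfl⟩, hB₂.1 ⟨j, rfl⟩⟩
    | succ n ih => rw [hrec]; exact schemeStep_mem_Icc hA ih
  intro n
  induction n with
  | zero => exact ⟨hTV, le_rfl⟩
  | succ n ih =>
    have hshift : ∀ j, u (n + 1) (j - 1)
        = schemeStep g Δt (qWeight ω δ Δx) (gridR1 δ Δx) (fun i => u n (i - 1)) j := by
      simp [hrec, schemeStep_shift]
    obtain ⟨hsum, hle⟩ :=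
      schemeStep_l1_contraction (hA _ _ (hbound n) fun j => hbound n (j - 1)) ih.1
    simp only [hshift, ← hrec] at hsum hle ⊢
    exact ⟨hsum, hle.trans ih.2⟩

/-- the nonlocal scheme is total variation diminishing. -/
theorem discrete_TVD
    (δ Δx Δt B₁ B₂ : ℝ) (hδ : 0 < δ) (hΔx : 0 < Δx) (hΔt : 0 < Δt)
    (ω : ℝ → ℝ) (hω : AdmissibleKernel δ ω)
    (g : ℝ → ℝ → ℝ)
    (u : ℕ → ℤ → ℝ)
    (hrec : ∀ n, u (n + 1) = schemeStep g Δt (qWeight ω δ Δx) (gridR1 δ Δx) (u n))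
    (hB₁ : IsGLB (Set.range (u 0)) B₁) (hB₂ : IsLUB (Set.range (u 0)) B₂)
    (hTV : Summable (fun j : ℤ => |u 0 j - u 0 (j - 1)|))
    (hg1 : ∀ a a' b, a ∈ Set.Icc B₁ B₂ → a' ∈ Set.Icc B₁ B₂ → b ∈ Set.Icc B₁ B₂ →
      a ≤ a' → g a b ≤ g a' b)
    (hg2 : ∀ a b b', a ∈ Set.Icc B₁ B₂ → b ∈ Set.Icc B₁ B₂ → b' ∈ Set.Icc B₁ B₂ →
      b ≤ b' → g a b' ≤ g a b)
    (hgC1 : ContDiffOn ℝ 1 (fun p : ℝ × ℝ => g p.1 p.2) (Set.Icc B₁ B₂ ×ˢ Set.Icc B₁ B₂))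
    (hCFL : Δt / Δx * (supAbsDeriv1 g B₁ B₂ + supAbsDeriv2 g B₁ B₂) ≤ 1)
    :
    ∀ n, Summable (fun j : ℤ => |u n j - u n (j - 1)|) ∧
      ∑' j : ℤ, |u n j - u n (j - 1)| ≤ ∑' j : ℤ, |u 0 j - u 0 (j - 1)| :=
  discrete_TVD_general δ Δx Δt B₁ B₂ hΔx hΔt ω hω g u hrec hB₁ hB₂ hTV hg1 hg2 hgC1 hCFL
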